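/- arXiv:1812.07400 — 2 statements merged into one kernel-verified Lean document; each statement's English description precedes it below -/
import Mathlib

section
/- Let h > (1/2)·ln(2+√3). Then there exists β_T ∈ (0, (3/2)·cosh²(h)) such that: (i) for every β with 0 < β < β_T, the equation Γ_{β,h}(λ) = λ has no solution λ > 0; and (ii) for every β with β_T < β < (3/2)·cosh²(h), the equation Γ_{β,h}(λ) = λ has exactly two solutions λ > 0. -/
/-!
With `c = cosh 2h` one has `tanh (x + h) + tanh (x - h) = 2 sinh 2x / (cosh 2x + c)`, so `x > 0` is a
fixed point of `Γ_{β,h}` iff `φ(2x) = 4β/3`, where `φ(t) = t (cosh t + c) / sinh t`. This `φ` tends to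
`1 + c = 2 cosh² h` at `0⁺` and satisfies `φ(t) > t`. The sign of `φ'` is that of
`ψ(t) = (cosh t + c) sinh t - t (1 + c cosh t)`, and `ψ' = sinh t · (2 sinh t - c t)`. The condition
`h > h_tc` means exactly `c > 2`, and then `2 sinh t - c t`, hence `ψ`, is negative and then positive
on `(0, ∞)`. So `φ` decreases to a minimum `m < 1 + c` and then increases to `∞`, and
`β_T = 3m/4`.
-/

open Real Set Filter Topology

lemma add_sq_div_two_le_two_mul_sinh {t : ℝ} (ht : 0 ≤ t) : t + t ^ 2 / 2 ≤ 2 * sinh t := by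
  have hexp := quadratic_le_exp_of_nonneg ht
  have hexp_neg : exp (-t) ≤ 1 := exp_le_one_iff.2 (neg_nonpos.2 ht)
  rw [sinh_eq]
  linarith

lemma two_lt_cosh_two_mul {h : ℝ} (hh : 1 / 2 * log (2 + √3) < h) : 2 < cosh (2 * h) := by
  have harcosh : arcosh 2 = log (2 + √3) := by norm_num [arcosh]
  have hpos : 0 < arcosh 2 := arcosh_pos one_lt_two
  have hlt : arcosh 2 < 2 * h := by linarith
  calc (2 : ℝ) = cosh (arcosh 2) := (cosh_arcosh one_le_two).symm
    _ < cosh (2 * h) := cosh_strictMonoOn hpos.le (hpos.trans hlt).le hlt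

lemma exists_sign_change_of_deriv {f f' : ℝ → ℝ} {a : ℝ} (hf : ∀ x, HasDerivAt f (f' x) x)
    (ha : 0 < a) (hf0 : f 0 = 0) (hneg : ∀ x ∈ Ioo 0 a, f' x < 0) (hpos : ∀ x ∈ Ioi a, 0 < f' x)
    (hT : ∃ T, 0 < T ∧ 0 < f T) :
    ∃ s, 0 < s ∧ (∀ t ∈ Ioo 0 s, f t < 0) ∧ ∀ t ∈ Ioi s, 0 < f t := by
  have hcont : Continuous f := continuous_iff_continuousAt.2 fun x => (hf x).continuousAt
  have hanti : StrictAntiOn f (Icc 0 a) :=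
    strictAntiOn_of_deriv_neg (convex_Icc 0 a) hcont.continuousOn fun x hx => by
      rw [interior_Icc] at hx
      rw [(hf x).deriv]
      exact hneg x hx
  have hmono : StrictMonoOn f (Ici a) :=
    strictMonoOn_of_deriv_pos (convex_Ici a) hcont.continuousOn fun x hx => by
      rw [interior_Ici] at hx
      rw [(hf x).deriv]
      exact hpos x hx
  have hneg_Ioc : ∀ t ∈ Ioc 0 a, f t < 0 := fun t ht =>
    hf0 ▸ hanti (left_mem_Icc.2 ha.le) (Ioc_subset_Icc_self ht) ht.1
  obtain ⟨T, hT0, hfT⟩ := hT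
  have haT : a < T := lt_of_not_ge fun h => (hneg_Ioc T ⟨hT0, h⟩).not_gt hfT
  obtain ⟨s, hs, hfs⟩ := intermediate_value_Icc haT.le hcont.continuousOn
    ⟨(hneg_Ioc a ⟨ha, le_rfl⟩).le, hfT.le⟩
  have has : a < s := lt_of_le_of_ne hs.1 fun h => (hneg_Ioc a ⟨ha, le_rfl⟩).ne (h ▸ hfs)
  refine ⟨s, ha.trans has, fun t ht => ?_, fun t ht => ?_⟩
  · rcases le_or_gt t a with h | h
    · exact hneg_Ioc t ⟨ht.1, h⟩
    · exact hfs ▸ hmono (mem_Ici.2 h.le) (mem_Ici.2 has.le) ht.2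
  · exact hfs ▸ hmono (mem_Ici.2 has.le) (mem_Ici.2 (has.trans ht).le) ht

lemma exists_sign_change_two_mul_sinh_sub {c : ℝ} (hc : 2 < c) :
    ∃ s, 0 < s ∧ (∀ t ∈ Ioo 0 s, 2 * sinh t - c * t < 0) ∧
      ∀ t ∈ Ioi s, 0 < 2 * sinh t - c * t := by
  have ha : 0 < arcosh (c / 2) := arcosh_pos (by linarith)
  have hcosh : cosh (arcosh (c / 2)) = c / 2 := cosh_arcosh (by linarith)
  refine exists_sign_change_of_deriv (f' := fun x => 2 * cosh x - c) (fun x => ?_) ha (by simp)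
    (fun x hx => ?_) (fun x hx => ?_) ⟨2 * c, by linarith, ?_⟩
  · exact (((hasDerivAt_sinh x).const_mul 2).sub ((hasDerivAt_id x).const_mul c)).congr_deriv
      (by ring)
  · have := cosh_strictMonoOn (mem_Ici.2 hx.1.le) (mem_Ici.2 ha.le) hx.2
    linarith
  · have := cosh_strictMonoOn (mem_Ici.2 ha.le) (mem_Ici.2 (ha.trans hx).le) hx
    linarith
  · have := add_sq_div_two_le_two_mul_sinh (by linarith : 0 ≤ 2 * c)
    nlinarith

lemma exists_sign_change_fixedPointParam_deriv_num {c : ℝ} (hc : 2 < c) :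
    ∃ s, 0 < s ∧ (∀ t ∈ Ioo 0 s, (cosh t + c) * sinh t - t * (1 + c * cosh t) < 0) ∧
      ∀ t ∈ Ioi s, 0 < (cosh t + c) * sinh t - t * (1 + c * cosh t) := by
  obtain ⟨a, ha, hneg, hpos⟩ := exists_sign_change_two_mul_sinh_sub hc
  refine exists_sign_change_of_deriv (f' := fun x => sinh x * (2 * sinh x - c * x))
    (fun x => ?_) ha (by simp) (fun x hx => ?_) (fun x hx => ?_) ⟨4 * c + 2, by linarith, ?_⟩
  · refine ((((hasDerivAt_cosh x).add_const c).mul (hasDerivAt_sinh x)).sub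
      ((hasDerivAt_id' x).mul (((hasDerivAt_cosh x).const_mul c).const_add 1))).congr_deriv ?_
    linear_combination cosh_sq x
  · exact mul_neg_of_pos_of_neg (sinh_pos_iff.2 hx.1) (hneg x hx)
  · exact mul_pos (sinh_pos_iff.2 (ha.trans hx)) (hpos x hx)
  · set T := 4 * c + 2
    have hsinh : (c + 1) * T ≤ sinh T := by
      have := add_sq_div_two_le_two_mul_sinh (by positivity : 0 ≤ T)
      nlinarith
    have hcosh := one_le_cosh T
    have hsinh_pos : 0 < sinh T := sinh_pos_iff.2 (by positivity)
    nlinarith [mul_le_mul_of_nonneg_left hsinh (by linarith : (0:ℝ) ≤ cosh T)]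

noncomputable def fixedPointParam (c t : ℝ) : ℝ := t * (cosh t + c) / sinh t

lemma hasDerivAt_fixedPointParam (c : ℝ) {x : ℝ} (hx : 0 < x) :
    HasDerivAt (fixedPointParam c)
      (((cosh x + c) * sinh x - x * (1 + c * cosh x)) / sinh x ^ 2) x := by
  refine (((hasDerivAt_id' x).mul ((hasDerivAt_cosh x).add_const c)).div (hasDerivAt_sinh x)
    (sinh_pos_iff.2 hx).ne').congr_deriv ?_
  simp only [Pi.mul_apply]
  congr 1
  linear_combination (-x) * cosh_sq x

lemma continuousOn_fixedPointParam (c : ℝ) : ContinuousOn (fixedPointParam c) (Ioi 0) :=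
  fun _ hx => (hasDerivAt_fixedPointParam c hx).continuousAt.continuousWithinAt

lemma lt_fixedPointParam {c t : ℝ} (hc : 0 ≤ c) (ht : 0 < t) : t < fixedPointParam c t := by
  have hsinh : 0 < sinh t := sinh_pos_iff.2 ht
  have hlt : sinh t < cosh t + c := by linarith [cosh_sub_sinh t, exp_pos (-t)]
  rw [fixedPointParam, lt_div_iff₀ hsinh]
  exact mul_lt_mul_of_pos_left hlt ht

lemma tendsto_fixedPointParam_atTop {c : ℝ} (hc : 0 ≤ c) :
    Tendsto (fixedPointParam c) atTop atTop :=
  tendsto_atTop_mono' atTop ((eventually_gt_atTop 0).mono fun _ ht => (lt_fixedPointParam hc ht).le)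
    tendsto_id

lemma tendsto_fixedPointParam_zero (c : ℝ) :
    Tendsto (fixedPointParam c) (𝓝[>] 0) (𝓝 (1 + c)) := by
  have hslope : Tendsto (fun t => sinh t / t) (𝓝[≠] 0) (𝓝 1) := by
    have := hasDerivAt_iff_tendsto_slope.1 (hasDerivAt_sinh 0)
    simpa [slope_fun_def_field, cosh_zero] using this
  have hcosh : Tendsto (fun t => cosh t + c) (𝓝[≠] 0) (𝓝 (1 + c)) := by
    have := ((by fun_prop : Continuous fun t => cosh t + c).tendsto 0).mono_left
      (nhdsWithin_le_nhds (s := {0}ᶜ))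
    rwa [cosh_zero] at this
  have hquot := hcosh.div hslope one_ne_zero
  rw [div_one] at hquot
  refine (hquot.mono_left (nhdsWithin_mono _ fun _ hx => ne_of_gt hx)).congr fun t => ?_
  rw [Pi.div_apply, fixedPointParam, div_div_eq_mul_div, mul_comm]

lemma exists_strictAntiOn_strictMonoOn_fixedPointParam {c : ℝ} (hc : 2 < c) :
    ∃ s, 0 < s ∧ StrictAntiOn (fixedPointParam c) (Ioc 0 s) ∧
      StrictMonoOn (fixedPointParam c) (Ici s) := by
  obtain ⟨s, hs, hneg, hpos⟩ := exists_sign_change_fixedPointParam_deriv_num hc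
  refine ⟨s, hs, ?_, ?_⟩
  · refine strictAntiOn_of_deriv_neg (convex_Ioc 0 s)
      ((continuousOn_fixedPointParam c).mono fun _ hx => hx.1) fun x hx => ?_
    rw [interior_Ioc] at hx
    rw [(hasDerivAt_fixedPointParam c hx.1).deriv]
    exact div_neg_of_neg_of_pos (hneg x hx) (pow_pos (sinh_pos_iff.2 hx.1) 2)
  · refine strictMonoOn_of_deriv_pos (convex_Ici s)
      ((continuousOn_fixedPointParam c).mono fun _ hx => hs.trans_le hx) fun x hx => ?_
    rw [interior_Ici] at hx
    have hx0 : 0 < x := hs.trans hx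
    rw [(hasDerivAt_fixedPointParam c hx0).deriv]
    exact div_pos (hpos x hx) (pow_pos (sinh_pos_iff.2 hx0) 2)

section Valley

variable {f : ℝ → ℝ} {a s : ℝ}

lemma le_of_strictAntiOn_Ioc_of_strictMonoOn_Ici (hanti : StrictAntiOn f (Ioc a s))
    (hmono : StrictMonoOn f (Ici s)) (has : a < s) {t : ℝ} (ht : a < t) : f s ≤ f t := by
  rcases le_or_gt t s with h | h
  · exact hanti.antitoneOn ⟨ht, h⟩ (right_mem_Ioc.2 has) h
  · exact (hmono self_mem_Ici (mem_Ici.2 h.le) h).le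

lemma lt_of_strictAntiOn_Ioc_of_tendsto {L : ℝ} (hanti : StrictAntiOn f (Ioc a s))
    (has : a < s) (hlim : Tendsto f (𝓝[>] a) (𝓝 L)) : f s < L := by
  obtain ⟨r, hr⟩ := exists_between has
  have hle : f r ≤ L := ge_of_tendsto hlim <| eventually_of_mem (Ioo_mem_nhdsGT hr.1) fun t ht =>
    hanti.antitoneOn ⟨ht.1, (ht.2.trans hr.2).le⟩ ⟨hr.1, hr.2.le⟩ ht.2.le
  exact (hanti ⟨hr.1, hr.2.le⟩ (right_mem_Ioc.2 has) hr.2).trans_le hle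

lemma exists_two_preimages_of_strictAntiOn_Ioc_of_strictMonoOn_Ici {L y : ℝ}
    (hcont : ContinuousOn f (Ioi a)) (hanti : StrictAntiOn f (Ioc a s))
    (hmono : StrictMonoOn f (Ici s)) (has : a < s) (hlim : Tendsto f (𝓝[>] a) (𝓝 L))
    (htop : Tendsto f atTop atTop) (hsy : f s < y) (hyL : y < L) :
    ∃ t₁ t₂, a < t₁ ∧ a < t₂ ∧ t₁ ≠ t₂ ∧ f t₁ = y ∧ f t₂ = y ∧
      ∀ t, a < t → f t = y → t = t₁ ∨ t = t₂ := by
  obtain ⟨r, hry, hr⟩ := ((hlim.eventually (eventually_gt_nhds hyL)).and (Ioo_mem_nhdsGT has)).exists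
  obtain ⟨R, hRy, hsR⟩ := ((htop.eventually_gt_atTop y).and (eventually_gt_atTop s)).exists
  obtain ⟨t₁, ht₁, hft₁⟩ := intermediate_value_Icc' hr.2.le
    (hcont.mono fun t ht => hr.1.trans_le ht.1) ⟨hsy.le, hry.le⟩
  obtain ⟨t₂, ht₂, hft₂⟩ := intermediate_value_Icc hsR.le
    (hcont.mono fun t ht => has.trans_le ht.1) ⟨hsy.le, hRy.le⟩
  have ht₁s : t₁ < s := ht₁.2.lt_of_ne fun h => hsy.ne (h ▸ hft₁)
  have hst₂ : s < t₂ := ht₂.1.lt_of_ne fun h => hsy.ne (h ▸ hft₂)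
  refine ⟨t₁, t₂, hr.1.trans_le ht₁.1, has.trans hst₂, (ht₁s.trans hst₂).ne, hft₁, hft₂,
    fun t ht hft => ?_⟩
  rcases le_or_gt t s with h | h
  · exact .inl <| hanti.injOn ⟨ht, h⟩ ⟨hr.1.trans_le ht₁.1, ht₁s.le⟩ (hft.trans hft₁.symm)
  · exact .inr <| hmono.injOn (mem_Ici.2 h.le) (mem_Ici.2 hst₂.le) (hft.trans hft₂.symm)

end Valley

lemma tanh_add_add_tanh_sub (x h : ℝ) :
    tanh (x + h) + tanh (x - h) = 2 * sinh (2 * x) / (cosh (2 * x) + cosh (2 * h)) := by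
  have hsinh : sinh (x + h) * cosh (x - h) + cosh (x + h) * sinh (x - h) = sinh (2 * x) := by
    rw [← sinh_add]
    ring_nf
  have hcosh : cosh (x + h) * cosh (x - h) = (cosh (2 * x) + cosh (2 * h)) / 2 := by
    rw [cosh_add, cosh_sub, cosh_two_mul, cosh_two_mul]
    linear_combination (cosh h ^ 2 + sinh h ^ 2) / 2 * cosh_sq x +
      (cosh x ^ 2 + sinh x ^ 2) / 2 * cosh_sq h
  rw [tanh_eq_sinh_div_cosh, tanh_eq_sinh_div_cosh, div_add_div _ _ (cosh_pos _).ne' (cosh_pos _).ne',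
    hsinh, hcosh]
  field_simp

lemma fixedPoint_iff (β h : ℝ) {x : ℝ} (hx : 0 < x) :
    β / 3 * (tanh (x + h) + tanh (x - h)) = x ↔
      fixedPointParam (cosh (2 * h)) (2 * x) = 4 * β / 3 := by
  have hsinh : 0 < sinh (2 * x) := sinh_pos_iff.2 (by linarith)
  have hden : 0 < cosh (2 * x) + cosh (2 * h) := add_pos (cosh_pos _) (cosh_pos _)
  rw [tanh_add_add_tanh_sub, fixedPointParam]
  field_simp
  constructor <;> intro H <;> linarith

/-- For `h > (1/2)ln(2+√3)` there is a threshold `β_T ∈ (0, (3/2)cosh²h)` such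
that for `0 < β < β_T` the equation `Γ_{β,h}(x) = x` has no positive solution,
while for `β_T < β < (3/2)cosh²h` it has exactly two positive solutions. -/
theorem tangency_threshold (h : ℝ)
    (hh : 1 / 2 * Real.log (2 + Real.sqrt 3) < h)
    (Γ : ℝ → ℝ → ℝ)
    (hΓ : ∀ β x, Γ β x = β / 3 * (Real.tanh (x + h) + Real.tanh (x - h))) :
    ∃ βT : ℝ, 0 < βT ∧ βT < 3 / 2 * Real.cosh h ^ 2 ∧
      (∀ β : ℝ, 0 < β → β < βT → ¬∃ x : ℝ, 0 < x ∧ Γ β x = x) ∧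
      (∀ β : ℝ, βT < β → β < 3 / 2 * Real.cosh h ^ 2 →
        ∃ x₁ x₂ : ℝ, 0 < x₁ ∧ 0 < x₂ ∧ x₁ ≠ x₂ ∧
          Γ β x₁ = x₁ ∧ Γ β x₂ = x₂ ∧
          ∀ x : ℝ, 0 < x → Γ β x = x → x = x₁ ∨ x = x₂) := by
  set c := cosh (2 * h) with hc_def
  set φ := fixedPointParam c
  have hc : 2 < c := two_lt_cosh_two_mul hh
  have hβc : 3 / 2 * cosh h ^ 2 = 3 / 4 * (1 + c) := by
    rw [hc_def, cosh_two_mul]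
    linear_combination 3 / 4 * cosh_sq h
  have hfix : ∀ β x, 0 < x → (Γ β x = x ↔ φ (2 * x) = 4 * β / 3) := fun β x hx =>
    hΓ β x ▸ fixedPoint_iff β h hx
  obtain ⟨s, hs, hanti, hmono⟩ := exists_strictAntiOn_strictMonoOn_fixedPointParam hc
  have hmin_pos : 0 < φ s := hs.trans (lt_fixedPointParam (by linarith) hs)
  have hmin_lt := lt_of_strictAntiOn_Ioc_of_tendsto hanti hs (tendsto_fixedPointParam_zero c)
  refine ⟨3 / 4 * φ s, by positivity, by linarith, ?_, fun β hβ hβ' => ?_⟩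
  · rintro β - hβ ⟨x, hx, hx_fix⟩
    have := le_of_strictAntiOn_Ioc_of_strictMonoOn_Ici hanti hmono hs (by positivity : 0 < 2 * x)
    linarith [(hfix β x hx).1 hx_fix]
  obtain ⟨t₁, t₂, ht₁, ht₂, hne, hφt₁, hφt₂, huniq⟩ :=
    exists_two_preimages_of_strictAntiOn_Ioc_of_strictMonoOn_Ici (continuousOn_fixedPointParam c)
      hanti hmono hs (tendsto_fixedPointParam_zero c) (tendsto_fixedPointParam_atTop (by linarith))
      (by linarith : φ s < 4 * β / 3) (by linarith)
  refine ⟨t₁ / 2, t₂ / 2, by positivity, by positivity, by simpa using hne, ?_, ?_, ?_⟩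
  · rwa [hfix β _ (by positivity), mul_div_cancel₀ _ two_ne_zero]
  · rwa [hfix β _ (by positivity), mul_div_cancel₀ _ two_ne_zero]
  · intro x hx hx_fix
    rcases huniq (2 * x) (by positivity) ((hfix β x hx).1 hx_fix) with h₁ | h₂
    · exact .inl (by linarith)
    · exact .inr (by linarith)
end

section
/- Let 0 ≤ h ≤ (1/2)·ln(2+√3) and 0 < β ≤ (3/2)·cosh²(h). Then the origin attracts all trajectories: every differentiable function f: [0, ∞) → ℝ² satisfying f'(t) = V(f(t)) for all t ≥ 0 converges to (0,0) as t → +∞. -/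
/-!
Writing `w = y'`, the second coordinate solves the Liénard equation `y'' + c(y) y' + 2y = 0`
with damping `c(v) = 3 - β (sech²(v + h) + sech²(v - h))`, and `x` is an explicit function of
`y` and `w`. In terms of `p = cosh² v` and `q = cosh² h`, the inequality `c ≥ 0` at `β = β_c(h)`
reduces to `(p - 1)(p - (2q - 1)(q - 1)) ≥ 0`, which holds for `q ≤ 3/2`, i.e. `h ≤ h_tc`, and
then `c` is positive away from `0`. The energy `2y² + w²` has derivative `-2 c(y) w² ≤ 0`. If
it stayed above some `ε > 0`, every window of fixed length would contain a stretch of fixed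
length on which `|y|` and `|w|` are both bounded below: when `|y|` is small, `|w|` is large and
carries `y` away from `0`; when `|y|` is large, the restoring force `-2y` forbids `w` from
staying small. The energy would then drop by a fixed amount per window, which is absurd.
-/

open Real Filter Set Topology

theorem abs_sub_le_mul_of_abs_deriv_le {f f' : ℝ → ℝ} {a b L : ℝ}
    (hf : ∀ s ∈ Icc a b, HasDerivAt f (f' s) s) (hL : ∀ s ∈ Icc a b, |f' s| ≤ L) :
    ∀ s ∈ Icc a b, |f s - f a| ≤ L * (s - a) :=
  norm_image_sub_le_of_norm_deriv_le_segment' (fun s hs => (hf s hs).hasDerivWithinAt)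
    fun s hs => hL s (Ico_subset_Icc_self hs)

theorem sub_le_mul_of_deriv_le {f f' : ℝ → ℝ} {a b C : ℝ} (hab : a ≤ b)
    (hf : ∀ s ∈ Icc a b, HasDerivAt f (f' s) s) (hC : ∀ s ∈ Icc a b, f' s ≤ C) :
    f b - f a ≤ C * (b - a) := by
  have hline : ∀ s, HasDerivAt (fun s => f a + C * (s - a)) C s := fun s => by
    simpa using (((hasDerivAt_id s).sub_const a).const_mul C).const_add (f a)
  have := image_le_of_deriv_right_le_deriv_boundary
    (fun s hs => (hf s hs).continuousAt.continuousWithinAt)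
    (fun s hs => (hf s (Ico_subset_Icc_self hs)).hasDerivWithinAt) (by simp)
    (fun s _ => (hline s).continuousAt.continuousWithinAt) (fun s _ => (hline s).hasDerivWithinAt)
    (fun s hs => hC s (Ico_subset_Icc_self hs)) (right_mem_Icc.2 hab)
  linarith

theorem half_le_abs_of_abs_deriv_le {f f' : ℝ → ℝ} {s η L ρ : ℝ}
    (hf : ∀ u ∈ Icc s (s + η), HasDerivAt f (f' u) u) (hL : ∀ u ∈ Icc s (s + η), |f' u| ≤ L)
    (hLη : L * η ≤ ρ / 2) (hρ : ρ ≤ |f s|) : ∀ u ∈ Icc s (s + η), ρ / 2 ≤ |f u| := by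
  intro u hu
  have hL0 : 0 ≤ L := (abs_nonneg _).trans (hL u hu)
  have hdist := abs_sub_le_mul_of_abs_deriv_le hf hL u hu
  have : L * (u - s) ≤ L * η := mul_le_mul_of_nonneg_left (by linarith [hu.2]) hL0
  linarith [abs_sub_abs_le_abs_sub (f s) (f u), abs_sub_comm (f u) (f s)]

theorem mul_le_abs_sub_of_abs_deriv_deriv_le {y w w' : ℝ → ℝ} {t τ M : ℝ} (hτ : 0 ≤ τ)
    (hy : ∀ s ∈ Icc t (t + τ), HasDerivAt y (w s) s)
    (hw : ∀ s ∈ Icc t (t + τ), HasDerivAt w (w' s) s) (hM : ∀ s ∈ Icc t (t + τ), |w' s| ≤ M) :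
    (|w t| - M * τ) * τ ≤ |y (t + τ) - y t| := by
  have hend : t + τ ∈ Icc t (t + τ) := right_mem_Icc.2 (by linarith)
  have hM0 : 0 ≤ M := (abs_nonneg _).trans (hM t (left_mem_Icc.2 (by linarith)))
  have hw_near : ∀ s ∈ Icc t (t + τ), |w s - w t| ≤ M * τ := fun s hs =>
    (abs_sub_le_mul_of_abs_deriv_le hw hM s hs).trans
      (mul_le_mul_of_nonneg_left (by linarith [hs.2]) hM0)
  -- `s ↦ y s - w t * s` has derivative `w s - w t`, of size at most `M * τ`
  have hdev := abs_sub_le_mul_of_abs_deriv_le (f := fun s => y s - w t * s)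
    (fun s hs => ((hy s hs).sub ((hasDerivAt_id' s).const_mul (w t))).congr_deriv (by ring))
    hw_near (t + τ) hend
  have hwτ : |w t * τ| = |w t| * τ := by rw [abs_mul, abs_of_nonneg hτ]
  have : |w t * τ| - |y (t + τ) - y t| ≤ |y (t + τ) - w t * (t + τ) - (y t - w t * t)| := by
    rw [show y (t + τ) - w t * (t + τ) - (y t - w t * t) = -(w t * τ - (y (t + τ) - y t)) by ring,
      abs_neg]
    exact abs_sub_abs_le_abs_sub _ _
  nlinarith

theorem tendsto_zero_of_sq_le {α : Type*} {l : Filter α} {f g : α → ℝ}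
    (hfg : ∀ t, f t ^ 2 ≤ g t) (hg : Tendsto g l (𝓝 0)) : Tendsto f l (𝓝 0) :=
  squeeze_zero_norm (fun t => abs_le_sqrt (hfg t)) (by simpa using hg.sqrt)

theorem tendsto_zero_of_antitoneOn_of_exists_lt {E : ℝ → ℝ} (hE : AntitoneOn E (Ici 0))
    (hE0 : ∀ t, 0 ≤ t → 0 ≤ E t) (hsmall : ∀ ε > 0, ∃ t, 0 ≤ t ∧ E t < ε) :
    Tendsto E atTop (𝓝 0) := by
  refine tendsto_order.2 ⟨fun a ha => eventually_atTop.2 ⟨0, fun t ht => ha.trans_le (hE0 t ht)⟩,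
    fun b hb => ?_⟩
  obtain ⟨t₀, ht₀, hlt⟩ := hsmall b hb
  exact eventually_atTop.2 ⟨t₀, fun t ht => (hE ht₀ (ht₀.trans ht) ht).trans_lt hlt⟩

theorem not_forall_add_le_sub {E : ℝ → ℝ} {P γ : ℝ} (hP : 0 ≤ P) (hγ : 0 < γ)
    (hE : ∀ t, 0 ≤ t → 0 ≤ E t) : ¬ ∀ t, 0 ≤ t → E (t + P) ≤ E t - γ := by
  intro hdrop
  have hiter : ∀ n : ℕ, E (n * P) ≤ E 0 - n * γ := by
    intro n
    induction n with
    | zero => simp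
    | succ n ih =>
      have := hdrop (n * P) (by positivity)
      push_cast
      rw [add_mul, one_mul]
      linarith
  obtain ⟨n, hn⟩ := exists_nat_gt (E 0 / γ)
  rw [div_lt_iff₀ hγ] at hn
  linarith [hiter n, hE (n * P) (by positivity)]

namespace Lienard

variable {k : ℝ} {y w : ℝ → ℝ}

theorem exists_half_le_and_lt_abs_of_le {g : ℝ → ℝ} {t r a C : ℝ} (hk : 0 < k) (ha : 0 < a)
    (hra : 8 * (C + k + 1) * a ≤ k * r)
    (hy : ∀ s ∈ Icc t (t + 1), HasDerivAt y (w s) s)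
    (hw : ∀ s ∈ Icc t (t + 1), HasDerivAt w (-k * y s - g s * w s) s)
    (hg : ∀ s ∈ Icc t (t + 1), |g s| ≤ C) (hr : r ≤ y t) :
    ∃ s ∈ Icc t (t + 1), r / 2 ≤ y s ∧ a < |w s| := by
  by_contra! hslow
  have ht : t ∈ Icc t (t + 1) := left_mem_Icc.2 (by linarith)
  have hC : 0 ≤ C := (abs_nonneg _).trans (hg t ht)
  have ha8 : 8 * a ≤ r := by nlinarith
  have hline : ∀ s, HasDerivAt (fun s => r - 2 * a * (s - t)) (-(2 * a)) s := fun s => by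
    simpa using (((hasDerivAt_id s).sub_const t).const_mul (2 * a)).const_sub r
  -- `y` stays above the line of slope `-2a`, since its speed is at most `a` wherever `y ≥ r / 2`
  have hbarrier : ∀ s ∈ Icc t (t + 1), r - 2 * a * (s - t) ≤ y s :=
    image_le_of_deriv_right_lt_deriv_boundary'
      (fun s _ => (hline s).continuousAt.continuousWithinAt) (fun s _ => (hline s).hasDerivWithinAt)
      (by simpa using hr) (fun s hs => (hy s hs).continuousAt.continuousWithinAt)
      (fun s hs => (hy s (Ico_subset_Icc_self hs)).hasDerivWithinAt)
      fun s hs heq => by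
        have := hslow s (Ico_subset_Icc_self hs) (by nlinarith [hs.2])
        linarith [neg_abs_le (w s)]
  have hslow' : ∀ s ∈ Icc t (t + 1), |w s| ≤ a := fun s hs =>
    hslow s hs (by nlinarith [hbarrier s hs, hs.2])
  have hdecel : ∀ s ∈ Icc t (t + 1), -k * y s - g s * w s ≤ -(k * r / 4) := by
    intro s hs
    have hgw : |g s * w s| ≤ C * a := by
      rw [abs_mul]; exact mul_le_mul (hg s hs) (hslow' s hs) (abs_nonneg _) hC
    have hys : 3 * r / 4 ≤ y s := by nlinarith [hbarrier s hs, hs.1, hs.2]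
    have hCa : C * a ≤ k * r / 8 := by nlinarith
    nlinarith [mul_le_mul_of_nonneg_left hys hk.le, neg_abs_le (g s * w s)]
  have hdrop := sub_le_mul_of_deriv_le (by linarith) hw hdecel
  have hend : t + 1 ∈ Icc t (t + 1) := right_mem_Icc.2 (by linarith)
  nlinarith [abs_le.1 (hslow' t ht), abs_le.1 (hslow' (t + 1) hend)]

theorem exists_half_le_abs_and_lt_abs_of_le_abs {g : ℝ → ℝ} {t r a C : ℝ} (hk : 0 < k)
    (ha : 0 < a) (hra : 8 * (C + k + 1) * a ≤ k * r)
    (hy : ∀ s ∈ Icc t (t + 1), HasDerivAt y (w s) s)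
    (hw : ∀ s ∈ Icc t (t + 1), HasDerivAt w (-k * y s - g s * w s) s)
    (hg : ∀ s ∈ Icc t (t + 1), |g s| ≤ C) (hr : r ≤ |y t|) :
    ∃ s ∈ Icc t (t + 1), r / 2 ≤ |y s| ∧ a < |w s| := by
  rcases le_abs'.1 hr with hneg | hpos
  · obtain ⟨s, hs, hys, hws⟩ := exists_half_le_and_lt_abs_of_le (y := fun s => -y s)
      (w := fun s => -w s) hk ha hra (fun s hs => (hy s hs).neg)
      (fun s hs => (hw s hs).neg.congr_deriv (by ring)) hg (by linarith)
    exact ⟨s, hs, hys.trans (neg_le_abs _), by simpa using hws⟩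
  · obtain ⟨s, hs, hys, hws⟩ := exists_half_le_and_lt_abs_of_le hk ha hra hy hw hg hpos
    exact ⟨s, hs, hys.trans (le_abs_self _), hws⟩

def energy (k : ℝ) (y w : ℝ → ℝ) (t : ℝ) : ℝ := k * y t ^ 2 + w t ^ 2

theorem energy_nonneg (hk : 0 ≤ k) (t : ℝ) : 0 ≤ energy k y w t := by
  unfold energy; positivity

theorem hasDerivAt_energy {c : ℝ → ℝ} {t : ℝ} (hy : HasDerivAt y (w t) t)
    (hw : HasDerivAt w (-k * y t - c (y t) * w t) t) :
    HasDerivAt (energy k y w) (-(2 * c (y t) * w t ^ 2)) t :=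
  (((hy.pow 2).const_mul k).add (hw.pow 2)).congr_deriv (by push_cast; ring)

theorem energy_antitoneOn {c : ℝ → ℝ} (hc0 : ∀ v, 0 ≤ c v)
    (hy : ∀ t, 0 ≤ t → HasDerivAt y (w t) t)
    (hw : ∀ t, 0 ≤ t → HasDerivAt w (-k * y t - c (y t) * w t) t) :
    AntitoneOn (energy k y w) (Ici 0) := by
  have hE : ∀ t ∈ Ici (0 : ℝ), HasDerivAt (energy k y w) (-(2 * c (y t) * w t ^ 2)) t :=
    fun t ht => hasDerivAt_energy (hy t ht) (hw t ht)
  refine antitoneOn_of_hasDerivWithinAt_nonpos (convex_Ici 0)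
    (fun t ht => (hE t ht).continuousAt.continuousWithinAt)
    (fun t ht => (hE t (interior_subset ht)).hasDerivWithinAt) fun t _ => ?_
  have := mul_nonneg (hc0 (y t)) (sq_nonneg (w t))
  linarith

theorem energy_le_sub_of_le_damping {c : ℝ → ℝ} {s η m α : ℝ} (hη : 0 ≤ η) (hm : 0 ≤ m)
    (hα : 0 ≤ α) (hy : ∀ u ∈ Icc s (s + η), HasDerivAt y (w u) u)
    (hw : ∀ u ∈ Icc s (s + η), HasDerivAt w (-k * y u - c (y u) * w u) u)
    (hc : ∀ u ∈ Icc s (s + η), m ≤ c (y u)) (hwα : ∀ u ∈ Icc s (s + η), α ≤ |w u|) :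
    energy k y w (s + η) ≤ energy k y w s - 2 * m * α ^ 2 * η := by
  have hdrop := sub_le_mul_of_deriv_le (C := -(2 * m * α ^ 2)) (by linarith)
    (fun u hu => hasDerivAt_energy (hy u hu) (hw u hu)) fun u hu => by
      have hα2 : α ^ 2 ≤ w u ^ 2 := by simpa using pow_le_pow_left₀ hα (hwα u hu) 2
      nlinarith [mul_le_mul (hc u hu) hα2 (sq_nonneg α) (hm.trans (hc u hu))]
  linarith

theorem energy_add_le_sub_of_le_abs {c : ℝ → ℝ} {s η ρ α m W M : ℝ} (hη : 0 ≤ η) (hm : 0 ≤ m)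
    (hα : 0 ≤ α) (hy : ∀ u ∈ Icc s (s + η), HasDerivAt y (w u) u)
    (hw : ∀ u ∈ Icc s (s + η), HasDerivAt w (-k * y u - c (y u) * w u) u)
    (hwW : ∀ u ∈ Icc s (s + η), |w u| ≤ W)
    (hMy : ∀ u ∈ Icc s (s + η), |-k * y u - c (y u) * w u| ≤ M)
    (hWη : W * η ≤ ρ / 2) (hMη : M * η ≤ α / 2)
    (hc : ∀ u ∈ Icc s (s + η), ρ / 2 ≤ |y u| → m ≤ c (y u)) (hys : ρ ≤ |y s|) (hws : α ≤ |w s|) :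
    energy k y w (s + η) ≤ energy k y w s - 2 * m * (α / 2) ^ 2 * η :=
  energy_le_sub_of_le_damping hη hm (by positivity) hy hw
    (fun u hu => hc u hu (half_le_abs_of_abs_deriv_le hy hwW hWη hys u hu))
    (half_le_abs_of_abs_deriv_le hw hMy hMη hws)

theorem exists_mem_Icc_half_le_abs_and_lt_abs {c : ℝ → ℝ} {t τ r a C M W₀ : ℝ} (hk : 0 < k)
    (ha : 0 < a) (hτ : 0 ≤ τ) (ht : 0 ≤ t)
    (hy : ∀ t, 0 ≤ t → HasDerivAt y (w t) t)
    (hw : ∀ t, 0 ≤ t → HasDerivAt w (-k * y t - c (y t) * w t) t)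
    (hC : ∀ t, 0 ≤ t → |c (y t)| ≤ C) (hM : ∀ t, 0 ≤ t → |-k * y t - c (y t) * w t| ≤ M)
    (hfast : ∀ t, 0 ≤ t → |y t| < r → W₀ ≤ |w t|)
    (hrτ : 2 * r ≤ (W₀ - M * τ) * τ) (hra : 8 * (C + k + 1) * a ≤ k * r) :
    ∃ s ∈ Icc t (t + τ + 1), r / 2 ≤ |y s| ∧ a < |w s| := by
  obtain ⟨t₁, ht₁, hyt₁⟩ : ∃ t₁ ∈ Icc t (t + τ), r ≤ |y t₁| := by
    rcases le_or_gt r |y t| with hyt | hyt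
    · exact ⟨t, left_mem_Icc.2 (by linarith), hyt⟩
    refine ⟨t + τ, right_mem_Icc.2 (by linarith), ?_⟩
    have hdrift := mul_le_abs_sub_of_abs_deriv_deriv_le hτ (fun s hs => hy s (ht.trans hs.1))
      (fun s hs => hw s (ht.trans hs.1)) fun s hs => hM s (ht.trans hs.1)
    have := mul_le_mul_of_nonneg_right (sub_le_sub_right (hfast t ht hyt) (M * τ)) hτ
    linarith [abs_sub (y (t + τ)) (y t)]
  have ht₁0 : 0 ≤ t₁ := ht.trans ht₁.1
  obtain ⟨s, hs, hgood⟩ := exists_half_le_abs_and_lt_abs_of_le_abs hk ha hra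
    (fun s hs => hy s (ht₁0.trans hs.1)) (fun s hs => hw s (ht₁0.trans hs.1))
    (fun s hs => hC s (ht₁0.trans hs.1)) hyt₁
  exact ⟨s, ⟨by linarith [ht₁.1, hs.1], by linarith [ht₁.2, hs.2]⟩, hgood⟩

theorem abs_le_sqrt_energy {c : ℝ → ℝ} (hk : 0 < k) (hc0 : ∀ v, 0 ≤ c v)
    (hy : ∀ t, 0 ≤ t → HasDerivAt y (w t) t)
    (hw : ∀ t, 0 ≤ t → HasDerivAt w (-k * y t - c (y t) * w t) t) {t : ℝ} (ht : 0 ≤ t) :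
    |y t| ≤ √(energy k y w 0 / k) ∧ |w t| ≤ √(energy k y w 0) := by
  have hEt := energy_antitoneOn hc0 hy hw (mem_Ici.2 le_rfl) ht ht
  unfold energy at hEt ⊢
  refine ⟨abs_le_sqrt ?_, abs_le_sqrt (by nlinarith)⟩
  rw [le_div_iff₀ hk]
  nlinarith

theorem sqrt_half_le_abs_of_le_energy {t r ε : ℝ} (hk : 0 < k)
    (hkr : k * r ^ 2 ≤ ε / 2) (hE : ε ≤ energy k y w t) (hyt : |y t| < r) : √(ε / 2) ≤ |w t| := by
  have hy2 : y t ^ 2 ≤ r ^ 2 := by simpa using pow_le_pow_left₀ (abs_nonneg _) hyt.le 2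
  have hw2 : ε / 2 ≤ w t ^ 2 := by
    unfold energy at hE
    nlinarith [mul_le_mul_of_nonneg_left hy2 hk.le]
  exact (sqrt_le_sqrt hw2).trans_eq (sqrt_sq_eq_abs _)

theorem exists_energy_drop_of_bounds {c : ℝ → ℝ} {ε Y W C M : ℝ} (hk : 0 < k)
    (hc : Continuous c) (hcpos : ∀ v, v ≠ 0 → 0 < c v)
    (hy : ∀ t, 0 ≤ t → HasDerivAt y (w t) t)
    (hw : ∀ t, 0 ≤ t → HasDerivAt w (-k * y t - c (y t) * w t) t)
    (hε : 0 < ε) (hlow : ∀ t, 0 ≤ t → ε ≤ energy k y w t)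
    (hanti : AntitoneOn (energy k y w) (Ici 0))
    (hW : 0 < W) (hM : 0 < M) (hC0 : 0 ≤ C)
    (hyY : ∀ t, 0 ≤ t → |y t| ≤ Y) (hwW : ∀ t, 0 ≤ t → |w t| ≤ W)
    (hCy : ∀ t, 0 ≤ t → |c (y t)| ≤ C) (hMy : ∀ t, 0 ≤ t → |-k * y t - c (y t) * w t| ≤ M) :
    ∃ P ≥ 0, ∃ γ > 0, ∀ t, 0 ≤ t → energy k y w (t + P) ≤ energy k y w t - γ := by
  -- `|y| < r` forces `|w| ≥ √(ε/2)`, which moves `y` by `2r` within time `τ`; `a` is the speed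
  -- found within one more unit of time, and `|y| ≥ r/4`, `|w| ≥ a/2` then persist for time `η`.
  set r := min √(ε / (2 * k)) (ε / (16 * M))
  set τ := √(ε / 2) / (2 * M)
  set a := k * r / (8 * (C + k + 1))
  set η := min (r / (4 * W)) (a / (2 * M))
  have hr : 0 < r := lt_min (sqrt_pos.2 (by positivity)) (by positivity)
  have ha : 0 < a := by positivity
  have hη : 0 < η := lt_min (by positivity) (by positivity)
  have hkr : k * r ^ 2 ≤ ε / 2 := by
    have := pow_le_pow_left₀ hr.le (min_le_left _ _) 2
    rw [sq_sqrt (by positivity), le_div_iff₀ (by positivity)] at this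
    linarith
  have hrτ : 2 * r ≤ (√(ε / 2) - M * τ) * τ := by
    have hε2 : √(ε / 2) ^ 2 = ε / 2 := sq_sqrt (by positivity)
    have hr16 : r ≤ ε / (16 * M) := min_le_right _ _
    have : (√(ε / 2) - M * τ) * τ = 2 * (ε / (16 * M)) := by
      simp only [τ]; field_simp; rw [hε2]; ring
    linarith
  have hra : 8 * (C + k + 1) * a ≤ k * r := by
    simp only [a]; field_simp; rfl
  have hWη : W * η ≤ r / 2 / 2 := calc
    W * η ≤ W * (r / (4 * W)) := mul_le_mul_of_nonneg_left (min_le_left _ _) hW.le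
    _ = r / 2 / 2 := by field_simp; ring
  have hMη : M * η ≤ a / 2 := calc
    M * η ≤ M * (a / (2 * M)) := mul_le_mul_of_nonneg_left (min_le_right _ _) hM.le
    _ = a / 2 := by field_simp
  obtain ⟨m, hm, hmc⟩ : ∃ m > 0, ∀ v ∈ {v : ℝ | r / 4 ≤ |v|} ∩ Icc (-Y) Y, m ≤ c v :=
    (isCompact_Icc.inter_left (isClosed_le continuous_const continuous_abs)).exists_forall_le'
      hc.continuousOn fun v hv => hcpos v (abs_pos.1 (by linarith [hv.1.out]))
  refine ⟨τ + 1 + η, by positivity, 2 * m * (a / 2) ^ 2 * η, by positivity, fun t ht => ?_⟩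
  obtain ⟨s, hs, hys, hws⟩ := exists_mem_Icc_half_le_abs_and_lt_abs hk ha (by positivity) ht hy hw
    hCy hMy (fun t ht => sqrt_half_le_abs_of_le_energy hk hkr (hlow t ht)) hrτ hra
  have hs0 : 0 ≤ s := ht.trans hs.1
  have hdrop := energy_add_le_sub_of_le_abs hη.le hm.le ha.le
    (fun u hu => hy u (hs0.trans hu.1)) (fun u hu => hw u (hs0.trans hu.1))
    (fun u hu => hwW u (hs0.trans hu.1)) (fun u hu => hMy u (hs0.trans hu.1)) hWη hMη
    (fun u hu hyu => hmc _ ⟨show r / 4 ≤ |y u| by linarith, abs_le.1 (hyY u (hs0.trans hu.1))⟩)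
    hys hws.le
  have hlater := hanti (mem_Ici.2 (by positivity : 0 ≤ s + η))
    (mem_Ici.2 (by positivity : 0 ≤ t + (τ + 1 + η))) (by linarith [hs.2])
  linarith [hanti ht hs0 hs.1]

theorem exists_energy_drop {c : ℝ → ℝ} {ε : ℝ} (hk : 0 < k) (hc : Continuous c)
    (hc0 : ∀ v, 0 ≤ c v) (hcpos : ∀ v, v ≠ 0 → 0 < c v)
    (hy : ∀ t, 0 ≤ t → HasDerivAt y (w t) t)
    (hw : ∀ t, 0 ≤ t → HasDerivAt w (-k * y t - c (y t) * w t) t)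
    (hε : 0 < ε) (hlow : ∀ t, 0 ≤ t → ε ≤ energy k y w t) :
    ∃ P ≥ 0, ∃ γ > 0, ∀ t, 0 ≤ t → energy k y w (t + P) ≤ energy k y w t - γ := by
  have hbound := fun t (ht : 0 ≤ t) => abs_le_sqrt_energy hk hc0 hy hw ht
  set Y := √(energy k y w 0 / k)
  set W := √(energy k y w 0)
  have hE₀ : ε ≤ energy k y w 0 := hlow 0 le_rfl
  have hY : 0 < Y := sqrt_pos.2 (div_pos (by linarith) hk)
  have hW : 0 < W := sqrt_pos.2 (by linarith)
  obtain ⟨C, hC⟩ := (isCompact_Icc (a := -Y) (b := Y)).exists_bound_of_continuousOn hc.continuousOn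
  have hCy : ∀ t, 0 ≤ t → |c (y t)| ≤ C := fun t ht => hC (y t) (abs_le.1 (hbound t ht).1)
  have hC0 : 0 ≤ C := (abs_nonneg _).trans (hCy 0 le_rfl)
  have hMy : ∀ t, 0 ≤ t → |-k * y t - c (y t) * w t| ≤ k * Y + C * W := fun t ht => by
    have hky : |-k * y t| ≤ k * Y := by
      rw [abs_mul, abs_neg, abs_of_pos hk]; exact mul_le_mul_of_nonneg_left (hbound t ht).1 hk.le
    have hcw : |c (y t) * w t| ≤ C * W := by
      rw [abs_mul]; exact mul_le_mul (hCy t ht) (hbound t ht).2 (abs_nonneg _) hC0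
    linarith [abs_sub (-k * y t) (c (y t) * w t)]
  exact exists_energy_drop_of_bounds hk hc hcpos hy hw hε hlow (energy_antitoneOn hc0 hy hw) hW
    (by positivity) hC0 (fun t ht => (hbound t ht).1) (fun t ht => (hbound t ht).2) hCy hMy

theorem tendsto_energy_zero {c : ℝ → ℝ} (hk : 0 < k) (hc : Continuous c)
    (hc0 : ∀ v, 0 ≤ c v) (hcpos : ∀ v, v ≠ 0 → 0 < c v)
    (hy : ∀ t, 0 ≤ t → HasDerivAt y (w t) t)
    (hw : ∀ t, 0 ≤ t → HasDerivAt w (-k * y t - c (y t) * w t) t) :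
    Tendsto (energy k y w) atTop (𝓝 0) := by
  refine tendsto_zero_of_antitoneOn_of_exists_lt (energy_antitoneOn hc0 hy hw)
    (fun t _ => energy_nonneg hk.le t) fun ε hε => ?_
  by_contra! hlow
  obtain ⟨P, hP, γ, hγ, hdrop⟩ := exists_energy_drop hk hc hc0 hcpos hy hw hε hlow
  exact not_forall_add_le_sub hP hγ (fun t _ => energy_nonneg hk.le t) hdrop

theorem tendsto_zero {c : ℝ → ℝ} (hk : 0 < k) (hc : Continuous c)
    (hc0 : ∀ v, 0 ≤ c v) (hcpos : ∀ v, v ≠ 0 → 0 < c v)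
    (hy : ∀ t, 0 ≤ t → HasDerivAt y (w t) t)
    (hw : ∀ t, 0 ≤ t → HasDerivAt w (-k * y t - c (y t) * w t) t) :
    Tendsto y atTop (𝓝 0) ∧ Tendsto w atTop (𝓝 0) := by
  have hE := tendsto_energy_zero hk hc hc0 hcpos hy hw
  refine ⟨tendsto_zero_of_sq_le (g := fun t => energy k y w t / k) (fun t => ?_)
    (by simpa using hE.div_const k), tendsto_zero_of_sq_le (fun t => ?_) hE⟩
  · rw [le_div_iff₀ hk, energy]; nlinarith [sq_nonneg (w t)]
  · unfold energy; nlinarith [sq_nonneg (y t)]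

end Lienard

theorem Real.hasDerivAt_tanh (x : ℝ) : HasDerivAt tanh (1 / cosh x ^ 2) x := by
  have hcosh : cosh x ≠ 0 := (cosh_pos x).ne'
  have := (hasDerivAt_sinh x).div (hasDerivAt_cosh x) hcosh
  rw [show tanh = fun x => sinh x / cosh x from funext tanh_eq_sinh_div_cosh]
  refine this.congr_deriv ?_
  field_simp
  linarith [cosh_sq_sub_sinh_sq x]

noncomputable def tanhSum (h v : ℝ) : ℝ := tanh (v + h) + tanh (v - h)

noncomputable def damping (β h v : ℝ) : ℝ := 3 - β * (1 / cosh (v + h) ^ 2 + 1 / cosh (v - h) ^ 2)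

theorem hasDerivAt_tanhSum (h v : ℝ) :
    HasDerivAt (tanhSum h) (1 / cosh (v + h) ^ 2 + 1 / cosh (v - h) ^ 2) v :=
  ((hasDerivAt_tanh (v + h)).comp_add_const v h).add ((hasDerivAt_tanh (v - h)).comp_sub_const v h)

theorem continuous_tanhSum (h : ℝ) : Continuous (tanhSum h) :=
  continuous_iff_continuousAt.2 fun v => (hasDerivAt_tanhSum h v).continuousAt

theorem tanhSum_zero (h : ℝ) : tanhSum h 0 = 0 := by
  simp [tanhSum, tanh_neg]

theorem continuous_damping (β h : ℝ) : Continuous (damping β h) := by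
  unfold damping
  fun_prop (disch := exact fun v => (pow_pos (cosh_pos _) 2).ne')

theorem cosh_sq_le_three_halves {h : ℝ} (hh : 0 ≤ h) (hh' : h ≤ 1 / 2 * log (2 + √3)) :
    cosh h ^ 2 ≤ 3 / 2 := by
  have h3 : √3 ^ 2 = 3 := sq_sqrt (by norm_num)
  have hpos : 0 < 2 + √3 := by positivity
  have hcosh_log : cosh (log (2 + √3)) = 2 := by
    rw [cosh_log hpos, inv_eq_of_mul_eq_one_right (b := 2 - √3) (by nlinarith)]
    ring
  have h2h : cosh (2 * h) ≤ 2 := by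
    calc cosh (2 * h) ≤ cosh (log (2 + √3)) := cosh_le_cosh.2 (by
          rw [abs_of_nonneg (by linarith), abs_of_nonneg (by linarith)]; linarith)
      _ = 2 := hcosh_log
  nlinarith [cosh_two_mul h, cosh_sq' h]

theorem cosh_sq_mul_add_le {h : ℝ} (hq : cosh h ^ 2 ≤ 3 / 2) (v : ℝ) :
    cosh h ^ 2 * (cosh (v + h) ^ 2 + cosh (v - h) ^ 2) + 2 * (cosh v ^ 2 - 1) ^ 2 ≤
      2 * (cosh (v + h) ^ 2 * cosh (v - h) ^ 2) := by
  have hsum : cosh (v + h) ^ 2 + cosh (v - h) ^ 2 =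
      2 * (cosh v ^ 2 * cosh h ^ 2 + sinh v ^ 2 * sinh h ^ 2) := by
    rw [cosh_add, cosh_sub]; ring
  have hprod : cosh (v + h) ^ 2 * cosh (v - h) ^ 2 =
      (cosh v ^ 2 * cosh h ^ 2 - sinh v ^ 2 * sinh h ^ 2) ^ 2 := by
    rw [cosh_add, cosh_sub]; ring
  rw [hsum, hprod, sinh_sq, sinh_sq]
  have hp : 1 ≤ cosh v ^ 2 := one_le_pow₀ (one_le_cosh v)
  have hq1 : 1 ≤ cosh h ^ 2 := one_le_pow₀ (one_le_cosh h)
  -- with `p = cosh² v`, `q = cosh² h` the two sides differ by `2 (p - 1) (1 - (2q - 1)(q - 1))`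
  nlinarith [mul_nonneg (sub_nonneg.2 hp)
    (show 0 ≤ 1 - (2 * cosh h ^ 2 - 1) * (cosh h ^ 2 - 1) by nlinarith)]

theorem damping_ge {β h : ℝ} (hq : cosh h ^ 2 ≤ 3 / 2) (hβ : β ≤ 3 / 2 * cosh h ^ 2) (v : ℝ) :
    3 * (cosh v ^ 2 - 1) ^ 2 / (cosh (v + h) ^ 2 * cosh (v - h) ^ 2) ≤ damping β h v := by
  have key := cosh_sq_mul_add_le hq v
  set A := cosh (v + h) ^ 2
  set B := cosh (v - h) ^ 2
  have hA : 0 < A := pow_pos (cosh_pos _) 2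
  have hB : 0 < B := pow_pos (cosh_pos _) 2
  have hsum : 1 / A + 1 / B = (A + B) / (A * B) := by field_simp; ring
  have hβ' : β * (1 / A + 1 / B) ≤ 3 / 2 * (cosh h ^ 2 * (A + B)) / (A * B) := by
    rw [hsum, mul_div_assoc', ← mul_assoc]
    gcongr
  have hkey : 3 / 2 * (cosh h ^ 2 * (A + B)) / (A * B) ≤
      3 / 2 * (2 * (A * B) - 2 * (cosh v ^ 2 - 1) ^ 2) / (A * B) := by
    gcongr
    linarith
  have hrhs : 3 / 2 * (2 * (A * B) - 2 * (cosh v ^ 2 - 1) ^ 2) / (A * B) =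
      3 - 3 * (cosh v ^ 2 - 1) ^ 2 / (A * B) := by
    field_simp
  unfold damping
  linarith

theorem damping_nonneg {β h : ℝ} (hq : cosh h ^ 2 ≤ 3 / 2) (hβ : β ≤ 3 / 2 * cosh h ^ 2) (v : ℝ) :
    0 ≤ damping β h v :=
  (div_nonneg (by positivity) (by positivity)).trans (damping_ge hq hβ v)

theorem damping_pos {β h v : ℝ} (hq : cosh h ^ 2 ≤ 3 / 2) (hβ : β ≤ 3 / 2 * cosh h ^ 2)
    (hv : v ≠ 0) : 0 < damping β h v := by
  have hp : 1 < cosh v ^ 2 := one_lt_pow₀ (one_lt_cosh.2 hv) two_ne_zero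
  exact lt_of_lt_of_le (by positivity [sub_pos.2 hp]) (damping_ge hq hβ v)

theorem hasDerivAt_velocity {β h t : ℝ} {x y : ℝ → ℝ}
    (hx : HasDerivAt x (-2 * x t + tanhSum h (y t)) t)
    (hy : HasDerivAt y (-y t + β * (-2 * x t + tanhSum h (y t))) t) :
    HasDerivAt (fun t => -y t + β * (-2 * x t + tanhSum h (y t)))
      (-2 * y t - damping β h (y t) * (-y t + β * (-2 * x t + tanhSum h (y t)))) t := by
  have hT := (hasDerivAt_tanhSum h (y t)).comp t hy
  refine (hy.neg.add (((hx.const_mul (-2)).add hT).const_mul β)).congr_deriv ?_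
  unfold damping
  ring

/-- For `0 ≤ h ≤ (1/2)ln(2+√3)` and `0 < β ≤ (3/2)cosh²h`, the origin attracts
all trajectories of the planar system `(x', y') = V(x, y)` with
`V(x,y) = (−2x + tanh(y+h) + tanh(y−h), −y + β(−2x + tanh(y+h) + tanh(y−h)))`. -/
theorem origin_global_attractor (β h : ℝ) (hβ : 0 < β) (hh : 0 ≤ h)
    (hh' : h ≤ 1 / 2 * Real.log (2 + Real.sqrt 3))
    (hβ' : β ≤ 3 / 2 * Real.cosh h ^ 2)
    (V : ℝ × ℝ → ℝ × ℝ)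
    (hV : ∀ x y : ℝ, V (x, y) =
      (-2 * x + Real.tanh (y + h) + Real.tanh (y - h),
       -y + β * (-2 * x + Real.tanh (y + h) + Real.tanh (y - h)))) :
    ∀ f : ℝ → ℝ × ℝ,
      (∀ t : ℝ, 0 ≤ t → HasDerivAt f (V (f t)) t) →
      Filter.Tendsto f Filter.atTop (nhds ((0 : ℝ), (0 : ℝ))) := by
  intro f hf
  have hq := cosh_sq_le_three_halves hh hh'
  set x := fun t => (f t).1
  set y := fun t => (f t).2
  set w := fun t => -y t + β * (-2 * x t + tanhSum h (y t))
  have hVf : ∀ t, V (f t) = (-2 * x t + tanhSum h (y t), w t) := fun t => by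
    rw [show f t = (x t, y t) from rfl, hV]
    exact Prod.ext (by simp only [tanhSum]; ring) (by simp only [w, tanhSum]; ring)
  have hx : ∀ t, 0 ≤ t → HasDerivAt x (-2 * x t + tanhSum h (y t)) t := fun t ht => by
    have := hasFDerivAt_fst.comp_hasDerivAt t (hf t ht)
    rwa [hVf] at this
  have hy : ∀ t, 0 ≤ t → HasDerivAt y (w t) t := fun t ht => by
    have := hasFDerivAt_snd.comp_hasDerivAt t (hf t ht)
    rwa [hVf] at this
  obtain ⟨hy0, hw0⟩ := Lienard.tendsto_zero two_pos (continuous_damping β h)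
    (damping_nonneg hq hβ') (fun v hv => damping_pos hq hβ' hv) hy
    fun t ht => hasDerivAt_velocity (hx t ht) (hy t ht)
  have hT : Tendsto (fun t => tanhSum h (y t)) atTop (𝓝 0) := by
    have := ((continuous_tanhSum h).tendsto 0).comp hy0
    rwa [tanhSum_zero] at this
  have hx0 : Tendsto x atTop (𝓝 0) := by
    have hxw : x = fun t => (β * tanhSum h (y t) - w t - y t) / (2 * β) := funext fun t => by
      field_simp; ring
    rw [hxw]
    simpa using (((hT.const_mul β).sub hw0).sub hy0).div_const (2 * β)
  simpa using hx0.prodMk_nhds hy0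
end
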